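/- arXiv:1411.4270 — 2 statements merged into one kernel-verified Lean document; each statement's English description precedes it below -/
import Mathlib

section
/- Let β > 0. A function φ : ℝ → ℝ solves the stationary equation 0 = β(φ(x) − φ(x−1)²) for all x (i.e. is a travelling-wave at speed c = 0) if and only if there exists a nonnegative 1-periodic function P : ℝ → ℝ with φ(x) = P(x)^(2^x) for all x, where P is required to be positive wherever φ is positive. In particular, for any 1-periodic nonnegative P, the function x ↦ P(x)^(2^x) satisfies φ(x) = φ(x−1)². -/
open Real

lemma sq_rpow_aux (a y : ℝ) (ha : 0 ≤ a) : (a ^ y) ^ 2 = a ^ (y * 2) := by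
  rw [Real.rpow_mul ha, Real.rpow_two]

lemma two_rpow_sub_one (x : ℝ) : (2:ℝ) ^ (x - 1) * 2 = (2:ℝ) ^ x := by
  rw [← Real.rpow_add_one (by norm_num : (2:ℝ) ≠ 0) (x - 1), sub_add_cancel]

/-- Speed-0 travelling waves of the lattice KPP equation are exactly the
functions P(x)^(2^x) with P nonnegative and 1-periodic (P positive wherever
φ is positive); conversely any such function satisfies φ(x) = φ(x-1)². -/
theorem stmt_2 (β : ℝ) (hβ : 0 < β) (φ : ℝ → ℝ) :
    ((∀ x : ℝ, (0:ℝ) = β * (φ x - (φ (x - 1)) ^ 2)) ↔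
      ∃ P : ℝ → ℝ, (∀ x, 0 ≤ P x) ∧ (∀ x, P (x + 1) = P x) ∧
        (∀ x, 0 < φ x → 0 < P x) ∧
        (∀ x, φ x = (P x) ^ ((2:ℝ) ^ x)))
    ∧
    (∀ P : ℝ → ℝ, (∀ x, 0 ≤ P x) → (∀ x, P (x + 1) = P x) →
      ∀ x : ℝ, (P x) ^ ((2:ℝ) ^ x) = ((P (x - 1)) ^ ((2:ℝ) ^ (x - 1))) ^ 2) := by
  have key : ∀ P : ℝ → ℝ, (∀ x, 0 ≤ P x) → (∀ x, P (x + 1) = P x) →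
      ∀ x : ℝ, (P x) ^ ((2:ℝ) ^ x) = ((P (x - 1)) ^ ((2:ℝ) ^ (x - 1))) ^ 2 := by
    intro P hP0 hPper x
    have hx : P x = P (x - 1) := by
      have := hPper (x - 1); rwa [sub_add_cancel] at this
    rw [hx, sq_rpow_aux _ _ (hP0 _), two_rpow_sub_one]
  constructor
  · constructor
    · intro h
      -- φ x = φ(x-1)^2 for all x
      have heq : ∀ x, φ x = (φ (x - 1)) ^ 2 := by
        intro x
        have := h x
        have : φ x - (φ (x - 1)) ^ 2 = 0 := by
          by_contra hne
          exact hne (by field_simp at this ⊢; nlinarith [h x])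
        linarith
      have hφ0 : ∀ x, 0 ≤ φ x := fun x => (heq x) ▸ sq_nonneg _
      refine ⟨fun x => (φ x) ^ ((2:ℝ) ^ (-x)), fun x => Real.rpow_nonneg (hφ0 x) _,
        ?_, fun x hx => Real.rpow_pos_of_pos hx _, ?_⟩
      · intro x
        show φ (x + 1) ^ ((2:ℝ) ^ (-(x+1))) = φ x ^ ((2:ℝ) ^ (-x))
        have h1 : φ (x + 1) = (φ x) ^ 2 := by
          have := heq (x + 1); rwa [add_sub_cancel_right] at this
        rw [h1, show ((φ x) ^ 2 : ℝ) = (φ x) ^ ((2:ℝ)) by rw [Real.rpow_two],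
          ← Real.rpow_mul (hφ0 x)]
        congr 1
        rw [show -x = -(x+1) + 1 by ring, Real.rpow_add_one (by norm_num : (2:ℝ) ≠ 0)]
        ring
      · intro x
        rw [← Real.rpow_mul (hφ0 x), ← Real.rpow_add (by norm_num : (0:ℝ) < 2)]
        norm_num
    · rintro ⟨P, hP0, hPper, _, hφ⟩ x
      rw [hφ x, hφ (x - 1), key P hP0 hPper x]
      ring
  · exact key
end

section
/- Let φ : ℝ → [0,1] be nonincreasing and satisfy φ(x) ≤ φ(x−1)² for all x ∈ ℝ, with φ(x₀) < 1 for some x₀. Then there exists A ∈ (0,1) and x₁ ∈ ℝ such that φ(x) ≤ A^{2^{x − x₁}} for all x ≥ x₁; in particular φ(x) → 0 doubly exponentially fast as x → +∞. -/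
open Real Filter

/-- A nonincreasing φ : ℝ → [0,1] with φ(x) ≤ φ(x-1)² and φ(x₀) < 1 for some
x₀ decays doubly exponentially: φ(x) ≤ A^(2^(x-x₁)) for x ≥ x₁, and φ → 0 at
+∞. -/
theorem stmt_8 (φ : ℝ → ℝ) (hmap : ∀ x, φ x ∈ Set.Icc (0:ℝ) 1)
    (hmono : Antitone φ) (hsq : ∀ x : ℝ, φ x ≤ (φ (x - 1)) ^ 2)
    (x₀ : ℝ) (h0 : φ x₀ < 1) :
    (∃ A ∈ Set.Ioo (0:ℝ) 1, ∃ x₁ : ℝ, ∀ x ≥ x₁,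
      φ x ≤ A ^ ((2:ℝ) ^ (x - x₁))) ∧
    Tendsto φ atTop (nhds 0) := by
  have hnn : ∀ x, 0 ≤ φ x := fun x => (hmap x).1
  -- iterate the square inequality
  have hiter : ∀ n : ℕ, φ (x₀ + n) ≤ (φ x₀) ^ (2 ^ n) := by
    intro n
    induction n with
    | zero => simp
    | succ n ih =>
      have h1 : φ (x₀ + (n + 1 : ℕ)) ≤ (φ (x₀ + n)) ^ 2 := by
        have := hsq (x₀ + (n + 1 : ℕ))
        have he : (x₀ + (n + 1 : ℕ)) - 1 = x₀ + n := by push_cast; ring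
        rwa [he] at this
      calc φ (x₀ + (n + 1 : ℕ)) ≤ (φ (x₀ + n)) ^ 2 := h1
        _ ≤ ((φ x₀) ^ (2 ^ n)) ^ 2 := by
            exact pow_le_pow_left₀ (hnn _) ih 2
        _ = (φ x₀) ^ (2 ^ (n + 1)) := by rw [← pow_mul, pow_succ]
  have key : ∃ A ∈ Set.Ioo (0:ℝ) 1, ∃ x₁ : ℝ, ∀ x ≥ x₁,
      φ x ≤ A ^ ((2:ℝ) ^ (x - x₁)) := by
    rcases le_or_gt (φ x₀) 0 with h | ha
    · -- φ vanishes beyond x₀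
      refine ⟨1/2, ⟨by norm_num, by norm_num⟩, x₀, fun x hx => ?_⟩
      have : φ x ≤ 0 := le_trans (hmono hx) h
      have h2 : (0:ℝ) < (1/2 : ℝ) ^ ((2:ℝ) ^ (x - x₀)) :=
        rpow_pos_of_pos (by norm_num) _
      linarith
    · set a := φ x₀ with ha'
      refine ⟨a ^ (1/2 : ℝ), ⟨rpow_pos_of_pos ha _,
        rpow_lt_one (le_of_lt ha) h0 (by norm_num)⟩, x₀, fun x hx => ?_⟩
      set n := ⌊x - x₀⌋₊ with hn
      have hxn : (n : ℝ) ≤ x - x₀ := Nat.floor_le (by linarith)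
      have hxn1 : x - x₀ < n + 1 := Nat.lt_floor_add_one _
      have h1 : φ x ≤ φ (x₀ + n) := hmono (by linarith)
      have h2 : φ (x₀ + n) ≤ a ^ (2 ^ n : ℕ) := hiter n
      have h3 : a ^ (2 ^ n : ℕ) = a ^ ((2:ℝ) ^ (n : ℝ)) := by
        rw [← rpow_natCast a (2 ^ n)]
        norm_num [rpow_natCast]
      have h4 : a ^ ((2:ℝ) ^ (n : ℝ)) ≤ a ^ ((2:ℝ) ^ (x - x₀ - 1)) := by
        apply rpow_le_rpow_of_exponent_ge ha (le_of_lt h0)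
        apply rpow_le_rpow_of_exponent_le (by norm_num)
        linarith
      have h5 : a ^ ((2:ℝ) ^ (x - x₀ - 1)) = (a ^ (1/2 : ℝ)) ^ ((2:ℝ) ^ (x - x₀)) := by
        rw [← rpow_mul (le_of_lt ha)]
        congr 1
        rw [show x - x₀ - 1 = x - x₀ + (-1) by ring, rpow_add (by norm_num : (0:ℝ) < 2)]
        rw [rpow_neg_one]
        ring
      calc φ x ≤ a ^ (2 ^ n : ℕ) := le_trans h1 h2
        _ = a ^ ((2:ℝ) ^ (n : ℝ)) := h3
        _ ≤ a ^ ((2:ℝ) ^ (x - x₀ - 1)) := h4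
        _ = (a ^ (1/2 : ℝ)) ^ ((2:ℝ) ^ (x - x₀)) := h5
  refine ⟨key, ?_⟩
  obtain ⟨A, ⟨hA0, hA1⟩, x₁, hbound⟩ := key
  have hAexp : Tendsto (fun t : ℝ => A ^ t) atTop (nhds 0) :=
    tendsto_rpow_atTop_of_base_lt_one A (by linarith) hA1
  have hexp : Tendsto (fun x : ℝ => (2:ℝ) ^ (x - x₁)) atTop atTop := by
    have h2 : Tendsto (fun x : ℝ => x - x₁) atTop atTop :=
      tendsto_atTop_add_const_right _ (-x₁) tendsto_id
    have h3 : Tendsto (fun t : ℝ => (2:ℝ) ^ t) atTop atTop := by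
      simp_rw [rpow_def_of_pos (by norm_num : (0:ℝ) < 2)]
      exact tendsto_exp_atTop.comp
        (Tendsto.const_mul_atTop (log_pos (by norm_num)) tendsto_id)
    exact h3.comp h2
  have hub : Tendsto (fun x => A ^ ((2:ℝ) ^ (x - x₁))) atTop (nhds 0) :=
    hAexp.comp hexp
  refine squeeze_zero' (Eventually.of_forall hnn) ?_ hub
  filter_upwards [eventually_ge_atTop x₁] with x hx
  exact hbound x hx
end
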